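/- Let R be the renormalization on probability measures on X̄ = X ∪ {∂}. Then for self-mappings f, f' of X and subsets S, S' ⊆ X, backward mappings satisfy R ∘ (f←_S)⋆ ∘ R ∘ (f'←_{S'})⋆ = R ∘ (f←_S ∘ f'←_{S'})⋆. -/

import Mathlib

open scoped Classical

/-- Backward mapping `f←_S : X̄ → X̄` (`∂` encoded by `none`): sends `x ∈ S` to `f x`,
every other point of `X` to `∂`, and `∂` to `∂`. -/
noncomputable def backward {X : Type*} (f : X → X) (S : Finset X) :
    Option X → Option X
  | none => none
  | some x => if x ∈ S then some (f x) else none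

/-- Pushforward of a finitely supported measure on `X̄` by a self-mapping of `X̄`. -/
noncomputable def push {X : Type*} [Fintype X] (g : Option X → Option X)
    (ν : Option X → NNReal) : Option X → NNReal :=
  fun o => ∑ o' ∈ Finset.univ.filter (fun o' => g o' = o), ν o'

/-- Renormalization: the normalized restriction of `ν` to `X` when `ν(X) ≠ 0`,
and the Dirac measure at the cemetery point `∂` otherwise. -/
noncomputable def renorm {X : Type*} [Fintype X] (ν : Option X → NNReal) :
    Option X → NNReal :=
  if (∑ x : X, ν (some x)) = 0 then (fun o => if o = none then 1 else 0)
  else fun o =>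
    match o with
    | none => 0
    | some x => ν (some x) / ∑ x : X, ν (some x)

/-!
`R ν` depends only on the restriction of `ν` to `X` and does not change when that restriction
is scaled by a nonzero constant. A backward mapping fixes `∂`, so on `X` the pushforward
`g⋆ μ` depends linearly on `μ|_X` alone; hence `g⋆ (R ν)` agrees on `X` with `g⋆ ν / ν(X)`,
and the outer `R` removes the factor (when `ν(X) = 0` both sides are `δ_∂`). It remains to
use `g⋆ ∘ g'⋆ = (g ∘ g')⋆`.
-/

section Renormalization

variable {X : Type*} [Fintype X]

theorem push_push (g g' : Option X → Option X) (ν : Option X → NNReal) :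
    push g (push g' ν) = push (g ∘ g') ν := by
  funext o
  simp only [push, Function.comp_apply]
  rw [Finset.sum_fiberwise_eq_sum_filter]
  congr 1
  ext o'
  simp

theorem push_apply_some {g : Option X → Option X} (hg : g none = none)
    (ν : Option X → NNReal) (y : X) :
    push g ν (some y) = ∑ x ∈ Finset.univ.filter (fun x => g (some x) = some y), ν (some x) := by
  simp [push, Finset.sum_filter, Fintype.sum_option, hg]

-- The junk value `a / 0 = 0` makes this hold also when `ν(X) = 0`.
theorem renorm_apply_some (ν : Option X → NNReal) (x : X) :
    renorm ν (some x) = ν (some x) / ∑ x : X, ν (some x) := by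
  unfold renorm
  split_ifs with h0 <;> simp [h0]

theorem renorm_of_forall_some_eq_zero {ν : Option X → NNReal} (hν : ∀ x, ν (some x) = 0) :
    renorm ν = fun o => if o = none then 1 else 0 := by
  rw [renorm, if_pos (Finset.sum_eq_zero fun x _ => hν x)]

theorem renorm_eq_of_forall_some_eq_div {μ ν : Option X → NNReal} {c : NNReal} (hc : c ≠ 0)
    (h : ∀ x, μ (some x) = ν (some x) / c) : renorm μ = renorm ν := by
  have hmass : ∑ x : X, μ (some x) = (∑ x : X, ν (some x)) / c := by
    simp_rw [h, Finset.sum_div]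
  by_cases hν : ∑ x : X, ν (some x) = 0
  · rw [renorm, renorm, if_pos hν, if_pos (by rw [hmass, hν, zero_div])]
  · funext o
    cases o with
    | none => simp [renorm, hν, hmass, hc]
    | some x => rw [renorm_apply_some, renorm_apply_some, hmass, h, div_div_div_cancel_right₀ hc]

theorem renorm_push_renorm {g : Option X → Option X} (hg : g none = none)
    (ν : Option X → NNReal) : renorm (push g (renorm ν)) = renorm (push g ν) := by
  have hpush : ∀ y, push g (renorm ν) (some y) = push g ν (some y) / ∑ x : X, ν (some x) := by
    intro y
    simp_rw [push_apply_some hg, renorm_apply_some, Finset.sum_div]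
  by_cases h0 : ∑ x : X, ν (some x) = 0
  · have hν : ∀ x, ν (some x) = 0 := fun x => Finset.sum_eq_zero_iff.mp h0 x (Finset.mem_univ x)
    rw [renorm_of_forall_some_eq_zero, renorm_of_forall_some_eq_zero]
    · intro y
      simp [push_apply_some hg, hν]
    · intro y
      rw [hpush, h0, div_zero]
  · exact renorm_eq_of_forall_some_eq_div h0 hpush

end Renormalization

theorem backward_none {X : Type*} (f : X → X) (S : Finset X) : backward f S none = none := rfl

/-- The renormalization factors out of compositions of pushforwards by backward
mappings: `R ∘ (f←_S)⋆ ∘ R ∘ (f'←_{S'})⋆ = R ∘ (f←_S ∘ f'←_{S'})⋆` on probability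
measures on `X̄`. -/
theorem renorm_push_backward_comp {X : Type*} [Fintype X]
    (f f' : X → X) (S S' : Finset X) :
    ∀ ν : Option X → NNReal, (∑ o : Option X, ν o = 1) →
      renorm (push (backward f S) (renorm (push (backward f' S') ν))) =
        renorm (push (backward f S ∘ backward f' S') ν) := by
  intro ν _
  rw [← push_push, renorm_push_renorm (backward_none f S)]
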